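/- arXiv:math/0611689 — 5 statements merged into one kernel-verified Lean document; each statement's English description precedes it below -/
import Mathlib

section
/- Let N ≥ 2, k ≥ 2 an even integer, a_k, b_k > 0, and let (q(t), p(t)) be a C¹ solution on [0,τ] (τ > 0) of the ODE system q_i' = p_i, p_1' = -∂_{q_1}H_∞ - (1/2)·𝟙_{k=2}·p_1, p_N' = -∂_{q_N}H_∞ - (1/2)·𝟙_{k=2}·p_N, p_i' = -∂_{q_i}H_∞ for 2 ≤ i ≤ N-1, where H_∞(p,q) = ∑_i (1/2)p_i² + b_k|q_i|^k + ∑_{i=1}^{N-1} a_k|q_{i+1}-q_i|^k. If H_∞(p(0), q(0)) = 1, then ∫_0^τ (p_1(s)² + p_N(s)²) ds > 0. -/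
open intervalIntegral

section Aux

open Filter Topology

lemma aux_mul_sign (x : ℝ) : x * Real.sign x = |x| := by
  rcases lt_trichotomy x 0 with h|h|h
  · rw [Real.sign_of_neg h, abs_of_neg h]; ring
  · simp [h]
  · rw [Real.sign_of_pos h, abs_of_pos h]; ring

lemma aux_pow_sign (m : ℕ) (hm : Odd m) (x : ℝ) : |x| ^ m * Real.sign x = x ^ m := by
  rcases lt_trichotomy x 0 with h|h|h
  · rw [Real.sign_of_neg h, abs_of_neg h, hm.neg_pow]; ring
  · simp [h, Real.sign_zero, zero_pow hm.pos.ne']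
  · rw [Real.sign_of_pos h, abs_of_pos h]; ring

lemma aux_tele (Q D : ℕ → ℝ) (hD0 : D 0 = 0) :
    ∀ n, ∑ i ∈ Finset.Icc 1 n, Q i * (D i - D (i-1))
      = Q n * D n - ∑ i ∈ Finset.Icc 1 (n-1), (Q (i+1) - Q i) * D i := by
  intro n
  induction n with
  | zero => simp [hD0]
  | succ m ih =>
    rw [Finset.sum_Icc_succ_top (by omega : 1 ≤ m + 1)]
    rcases Nat.eq_zero_or_pos m with h | h
    · subst h; simp [hD0]
    · have h1 : m + 1 - 1 = m := rfl
      rw [h1, ih]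
      obtain ⟨m', rfl⟩ : ∃ m', m = m' + 1 := ⟨m - 1, by omega⟩
      rw [Finset.sum_Icc_succ_top (by omega : 1 ≤ m' + 1)]
      have h2 : m' + 1 - 1 = m' := rfl
      rw [h2]
      ring

lemma aux_integral_pos (f : ℝ → ℝ) (τ : ℝ) (hτ : 0 < τ)
    (hc : ContinuousOn f (Set.Icc 0 τ)) (h0 : ∀ t ∈ Set.Icc 0 τ, 0 ≤ f t)
    (t₁ : ℝ) (ht₁ : t₁ ∈ Set.Icc 0 τ) (hpos : 0 < f t₁) :
    0 < ∫ s in (0:ℝ)..τ, f s := by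
  obtain ⟨δ, hδ, hball⟩ := Metric.continuousWithinAt_iff.mp (hc t₁ ht₁) (f t₁ / 2) (by linarith)
  set c := max 0 (t₁ - δ/2) with hc_def
  set d := min τ (t₁ + δ/2) with hd_def
  have hct : c ≤ t₁ := max_le ht₁.1 (by linarith)
  have htd : t₁ ≤ d := le_min ht₁.2 (by linarith)
  have hc0 : 0 ≤ c := le_max_left _ _
  have hdτ : d ≤ τ := min_le_left _ _
  have hcd : c < d := by
    rcases lt_or_eq_of_le ht₁.2 with h | h
    · exact lt_of_le_of_lt hct (lt_min h (by linarith))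
    · have hlt : c < τ := max_lt hτ (by rw [h]; linarith)
      calc c < τ := hlt
        _ ≤ d := le_min le_rfl (by rw [h]; linarith)
  have hsub : Set.Icc c d ⊆ Set.Icc 0 τ := Set.Icc_subset_Icc hc0 hdτ
  have hfpos : ∀ x ∈ Set.Ioo c d, 0 < f x := by
    intro x hx
    have hx' : x ∈ Set.Icc 0 τ := hsub ⟨hx.1.le, hx.2.le⟩
    have hdist : dist x t₁ < δ := by
      rw [Real.dist_eq, abs_lt]
      constructor
      · have h' : t₁ - δ/2 ≤ c := le_max_right _ _
        have := hx.1; nlinarith [h']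
      · have h' : d ≤ t₁ + δ/2 := min_le_right _ _
        have := hx.2; nlinarith [h']
    have := hball hx' hdist
    rw [Real.dist_eq, abs_lt] at this
    linarith [this.1]
  have hint : IntervalIntegrable f MeasureTheory.volume c d := by
    apply ContinuousOn.intervalIntegrable
    rw [Set.uIcc_of_le hcd.le]
    exact hc.mono hsub
  have hmid : 0 < ∫ s in c..d, f s :=
    intervalIntegral.intervalIntegral_pos_of_pos_on hint hfpos hcd
  have hint1 : IntervalIntegrable f MeasureTheory.volume 0 c := by
    apply ContinuousOn.intervalIntegrable
    rw [Set.uIcc_of_le hc0]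
    exact hc.mono (Set.Icc_subset_Icc le_rfl (hcd.le.trans hdτ))
  have hint2 : IntervalIntegrable f MeasureTheory.volume d τ := by
    apply ContinuousOn.intervalIntegrable
    rw [Set.uIcc_of_le hdτ]
    exact hc.mono (Set.Icc_subset_Icc (hc0.trans hcd.le) le_rfl)
  have h1 : 0 ≤ ∫ s in (0:ℝ)..c, f s := by
    apply intervalIntegral.integral_nonneg hc0
    intro u hu; exact h0 u (Set.Icc_subset_Icc le_rfl (hcd.le.trans hdτ) hu)
  have h2 : 0 ≤ ∫ s in d..τ, f s := by
    apply intervalIntegral.integral_nonneg hdτ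
    intro u hu; exact h0 u (Set.Icc_subset_Icc (hc0.trans hcd.le) le_rfl hu)
  have hsplit : ∫ s in (0:ℝ)..τ, f s
      = (∫ s in (0:ℝ)..c, f s) + (∫ s in c..d, f s) + ∫ s in d..τ, f s := by
    rw [intervalIntegral.integral_add_adjacent_intervals hint1 hint,
      intervalIntegral.integral_add_adjacent_intervals (hint1.trans hint) hint2]
  rw [hsplit]
  linarith

lemma aux_eq_on_closure (f : ℝ → ℝ) (τ c : ℝ) (hτ : 0 < τ)
    (hc : ContinuousOn f (Set.Icc 0 τ)) (h : ∀ t ∈ Set.Ioo 0 τ, f t = c) :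
    ∀ t ∈ Set.Icc 0 τ, f t = c := by
  intro t ht
  have hne : (𝓝[Set.Ioo 0 τ] t).NeBot := by
    rw [← mem_closure_iff_nhdsWithin_neBot, closure_Ioo hτ.ne]
    exact ht
  have h1 : Filter.Tendsto f (𝓝[Set.Ioo 0 τ] t) (𝓝 (f t)) :=
    (hc t ht).mono Set.Ioo_subset_Icc_self
  have h2 : Filter.Tendsto f (𝓝[Set.Ioo 0 τ] t) (𝓝 c) := by
    apply Filter.Tendsto.congr' _ tendsto_const_nhds
    filter_upwards [self_mem_nhdsWithin] with s hs
    exact (h s hs).symm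
  exact tendsto_nhds_unique h1 h2

lemma aux_inj (k : ℕ) (hk : 2 ≤ k) (hkeven : Even k) (c : ℝ) (hc : 0 < c)
    (g : ℝ → ℝ) (hg : ∀ x, g x = c * |x| ^ (k-1) * Real.sign x) : Function.Injective g := by
  have hodd : Odd (k-1) := Nat.Even.sub_odd (by omega) hkeven odd_one
  have hx : ∀ x, g x = c * x ^ (k-1) := fun x => by
    rw [hg, mul_assoc, aux_pow_sign _ hodd]
  intro x y hxy
  rw [hx, hx] at hxy
  exact hodd.strictMono_pow.injective (mul_left_cancel₀ hc.ne' hxy)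

lemma aux_mul_self (m : ℕ) (hm : 1 ≤ m) (c : ℝ) (g : ℝ → ℝ)
    (hg : ∀ x, g x = c * |x| ^ (m-1) * Real.sign x) (x : ℝ) : x * g x = c * |x| ^ m := by
  rw [hg]
  have h1 : |x| ^ (m-1) * |x| = |x| ^ m := by rw [← pow_succ]; congr 1; omega
  calc x * (c * |x|^(m-1) * Real.sign x) = c * (|x|^(m-1) * (x * Real.sign x)) := by ring
    _ = c * (|x|^(m-1) * |x|) := by rw [aux_mul_sign]
    _ = c * |x| ^ m := by rw [h1]

end Aux

/-- non-degeneracy of the limiting deterministic pinned chain (case l = k):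
if the initial energy `H_∞ = 1`, the boundary momenta cannot vanish identically on `[0,τ]`. -/
theorem stmt1 (N k : ℕ) (hN : 2 ≤ N) (hk : 2 ≤ k) (hkeven : Even k)
    (a b τ : ℝ) (ha : 0 < a) (hb : 0 < b) (hτ : 0 < τ)
    (q p : ℕ → ℝ → ℝ)
    (φ ψ : ℝ → ℝ)
    (hφ : ∀ x, φ x = k * a * |x| ^ (k - 1) * Real.sign x)
    (hψ : ∀ x, ψ x = k * b * |x| ^ (k - 1) * Real.sign x)
    -- the ODE system q_i' = p_i, p' = -∂_q H_∞ - (1/2)·𝟙_{k=2}·p at the boundary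
    (hq : ∀ i ∈ Finset.Icc 1 N, ∀ t ∈ Set.Icc 0 τ, HasDerivAt (q i) (p i t) t)
    (hp1 : ∀ t ∈ Set.Icc 0 τ,
      HasDerivAt (p 1)
        (-(ψ (q 1 t) - φ (q 2 t - q 1 t)) - (if k = 2 then (1/2) * p 1 t else 0)) t)
    (hpN : ∀ t ∈ Set.Icc 0 τ,
      HasDerivAt (p N)
        (-(ψ (q N t) + φ (q N t - q (N - 1) t)) - (if k = 2 then (1/2) * p N t else 0)) t)
    (hpi : ∀ i, 2 ≤ i → i ≤ N - 1 → ∀ t ∈ Set.Icc 0 τ,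
      HasDerivAt (p i)
        (-(ψ (q i t) + φ (q i t - q (i - 1) t) - φ (q (i + 1) t - q i t))) t)
    -- initial energy H_∞(p(0), q(0)) = 1
    (hH : (∑ i ∈ Finset.Icc 1 N, ((1/2) * (p i 0) ^ 2 + b * |q i 0| ^ k))
        + ∑ i ∈ Finset.Icc 1 (N - 1), a * |q (i + 1) 0 - q i 0| ^ k = 1) :
    0 < ∫ s in (0:ℝ)..τ, ((p 1 s) ^ 2 + (p N s) ^ 2) := by
  by_contra hcon
  push_neg at hcon
  have h1N : (1:ℕ) ∈ Finset.Icc 1 N := by simp; omega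
  have hNN : N ∈ Finset.Icc 1 N := by simp; omega
  have hkpos : (0:ℝ) < k := by exact_mod_cast (by omega : 0 < k)
  -- continuity of everything
  have hqc : ∀ i ∈ Finset.Icc 1 N, ContinuousOn (q i) (Set.Icc 0 τ) :=
    fun i hi t ht => ((hq i hi t ht).continuousAt).continuousWithinAt
  have hp1c : ContinuousOn (p 1) (Set.Icc 0 τ) :=
    fun t ht => ((hp1 t ht).continuousAt).continuousWithinAt
  have hpNc : ContinuousOn (p N) (Set.Icc 0 τ) :=
    fun t ht => ((hpN t ht).continuousAt).continuousWithinAt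
  -- the boundary momenta vanish
  have hzero : ∀ t ∈ Set.Icc 0 τ, p 1 t = 0 ∧ p N t = 0 := by
    intro t ht
    by_contra hne
    have hft : 0 < (p 1 t)^2 + (p N t)^2 := by
      rcases not_and_or.mp hne with h | h
      · have h1 := pow_two_pos_of_ne_zero h
        nlinarith [sq_nonneg (p N t)]
      · have h1 := pow_two_pos_of_ne_zero h
        nlinarith [sq_nonneg (p 1 t)]
    have := aux_integral_pos (fun s => (p 1 s)^2 + (p N s)^2) τ hτ
      ((hp1c.pow 2).add (hpNc.pow 2)) (fun u _ => by positivity) t ht hft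
    linarith
  set t₀ := τ/2 with ht₀def
  have ht₀ : t₀ ∈ Set.Ioo 0 τ := ⟨by rw [ht₀def]; linarith, by rw [ht₀def]; linarith⟩
  have hIooIcc : Set.Ioo 0 τ ⊆ Set.Icc 0 τ := Set.Ioo_subset_Icc_self
  have ht₀Icc : t₀ ∈ Set.Icc 0 τ := hIooIcc ht₀
  -- derivative of a function locally constant on (0,τ) is 0
  have derivzero : ∀ (g : ℝ → ℝ) (cst : ℝ), (∀ s ∈ Set.Ioo 0 τ, g s = cst) →
      ∀ t ∈ Set.Ioo 0 τ, ∀ d : ℝ, HasDerivAt g d t → d = 0 := by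
    intro g cst hg t ht d hd
    have hev : g =ᶠ[nhds t] (fun _ => cst) := by
      filter_upwards [isOpen_Ioo.mem_nhds ht] with s hs
      exact hg s hs
    have h0 : HasDerivAt g 0 t := (hasDerivAt_const t cst).congr_of_eventuallyEq hev
    exact hd.unique h0
  -- constancy of q i from vanishing momentum
  have const_of : ∀ i ∈ Finset.Icc 1 N, (∀ t ∈ Set.Icc 0 τ, p i t = 0) →
      ∀ t ∈ Set.Icc 0 τ, q i t = q i t₀ := by
    intro i hi hpz t ht
    have key : ∀ s u : ℝ, s ∈ Set.Icc 0 τ → u ∈ Set.Icc 0 τ → s < u → q i u = q i s := by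
      intro s u hs hu hsu
      obtain ⟨c, hcmem, hceq⟩ := exists_hasDerivAt_eq_slope (q i) (p i) hsu
        ((hqc i hi).mono (Set.Icc_subset_Icc hs.1 hu.2))
        (fun x hx => hq i hi x ⟨hs.1.trans hx.1.le, hx.2.le.trans hu.2⟩)
      have hc0 : p i c = 0 := hpz c ⟨hs.1.trans hcmem.1.le, hcmem.2.le.trans hu.2⟩
      rw [hc0] at hceq
      rcases div_eq_zero_iff.mp hceq.symm with h2 | h2
      · linarith
      · exfalso; linarith
    rcases lt_trichotomy t t₀ with h|h|h
    · exact (key t t₀ ht ht₀Icc h).symm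
    · rw [h]
    · exact key t₀ t ht₀Icc ht h
  -- injectivity of φ
  have hφinj : Function.Injective φ :=
    aux_inj k hk hkeven ((k:ℝ)*a) (by positivity) φ hφ
  -- the base case
  have base : (∀ t ∈ Set.Icc 0 τ, p 1 t = 0) ∧ (∀ t ∈ Set.Icc 0 τ, q 1 t = q 1 t₀) :=
    ⟨fun t ht => (hzero t ht).1, const_of 1 h1N (fun t ht => (hzero t ht).1)⟩
  -- the inductive step along the chain
  have step : ∀ i, 1 ≤ i → i < N →
      (∀ j, 1 ≤ j → j ≤ i →
        (∀ t ∈ Set.Icc 0 τ, p j t = 0) ∧ (∀ t ∈ Set.Icc 0 τ, q j t = q j t₀)) →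
      (∀ t ∈ Set.Icc 0 τ, p (i+1) t = 0) ∧ (∀ t ∈ Set.Icc 0 τ, q (i+1) t = q (i+1) t₀) := by
    intro i hi1 hiN IH
    have hmem : (i+1) ∈ Finset.Icc 1 N := by simp; omega
    have hpzi := (IH i hi1 le_rfl).1
    have hqci := (IH i hi1 le_rfl).2
    have eqn : ∀ t ∈ Set.Ioo 0 τ, φ (q (i+1) t - q i t)
        = ψ (q i t) + (if 2 ≤ i then φ (q i t - q (i-1) t) else 0) := by
      intro t ht
      rcases Nat.lt_or_ge i 2 with h2 | h2
      · have hi1' : i = 1 := by omega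
        subst hi1'
        have hd := derivzero (p 1) 0 (fun s hs => hpzi s (hIooIcc hs)) t ht _ (hp1 t (hIooIcc ht))
        have hp1t : p 1 t = 0 := hpzi t (hIooIcc ht)
        rw [hp1t] at hd
        have hif : (if k = 2 then (1:ℝ)/2 * 0 else 0) = 0 := by split <;> ring
        rw [hif] at hd
        rw [if_neg (by omega : ¬ (2 ≤ 1))]
        simp only [show (1:ℕ)+1 = 2 from rfl]
        linarith
      · have hd := derivzero (p i) 0 (fun s hs => hpzi s (hIooIcc hs)) t ht _
          (hpi i h2 (by omega) t (hIooIcc ht))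
        rw [if_pos h2]
        linarith
    have hkey : ∀ t ∈ Set.Ioo 0 τ, φ (q (i+1) t - q i t) = φ (q (i+1) t₀ - q i t₀) := by
      intro t ht
      rw [eqn t ht, eqn t₀ ht₀, hqci t (hIooIcc ht)]
      congr 1
      split_ifs with h2
      · rw [(IH (i-1) (by omega) (by omega)).2 t (hIooIcc ht)]
      · rfl
    have hqconst : ∀ t ∈ Set.Icc 0 τ, q (i+1) t = q (i+1) t₀ := by
      apply aux_eq_on_closure _ τ _ hτ (hqc (i+1) hmem)
      intro t ht
      have h' := hφinj (hkey t ht)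
      have hq' := hqci t (hIooIcc ht)
      linarith
    have hpIoo : ∀ t ∈ Set.Ioo 0 τ, p (i+1) t = 0 := by
      intro t ht
      have hev : q (i+1) =ᶠ[nhds t] (fun _ => q (i+1) t₀) := by
        filter_upwards [isOpen_Ioo.mem_nhds ht] with s hs
        exact hqconst s (hIooIcc hs)
      have h0 : HasDerivAt (q (i+1)) 0 t := (hasDerivAt_const t _).congr_of_eventuallyEq hev
      exact (hq (i+1) hmem t (hIooIcc ht)).unique h0
    have hpc : ContinuousOn (p (i+1)) (Set.Icc 0 τ) := by
      rcases eq_or_lt_of_le (show i+1 ≤ N by omega) with hEq | hLt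
      · rw [hEq]
        exact hpNc
      · exact fun t ht => ((hpi (i+1) (by omega) (by omega) t ht).continuousAt).continuousWithinAt
    exact ⟨aux_eq_on_closure _ τ 0 hτ hpc hpIoo, hqconst⟩
  -- full induction
  have main : ∀ i, 1 ≤ i → i ≤ N →
      (∀ t ∈ Set.Icc 0 τ, p i t = 0) ∧ (∀ t ∈ Set.Icc 0 τ, q i t = q i t₀) := by
    have haux : ∀ m, ∀ j, 1 ≤ j → j ≤ m → j ≤ N →
        (∀ t ∈ Set.Icc 0 τ, p j t = 0) ∧ (∀ t ∈ Set.Icc 0 τ, q j t = q j t₀) := by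
      intro m
      induction m with
      | zero => intro j h1 h2 h3; omega
      | succ n ih =>
        intro j h1 h2 h3
        rcases Nat.lt_or_ge j (n+1) with h | h
        · exact ih j h1 (by omega) h3
        · have hj : j = n + 1 := by omega
          subst hj
          rcases Nat.eq_zero_or_pos n with hn0 | hn0
          · subst hn0; exact base
          · exact step n hn0 (by omega) (fun j' hj1 hj2 => ih j' hj1 hj2 (by omega))
    intro i h1 h2
    exact haux i i h1 le_rfl h2
  -- stationarity equations at t₀
  have peq : ∀ i, 1 ≤ i → i ≤ N → ∀ d : ℝ, HasDerivAt (p i) d t₀ → d = 0 := by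
    intro i hi1 hi2 d hd
    exact derivzero (p i) 0 (fun s hs => (main i hi1 hi2).1 s (hIooIcc hs)) t₀ ht₀ d hd
  have hp1t₀ : p 1 t₀ = 0 := (main 1 le_rfl (by omega)).1 t₀ ht₀Icc
  have hpNt₀ : p N t₀ = 0 := (main N (by omega) le_rfl).1 t₀ ht₀Icc
  have hif0 : (if k = 2 then (1:ℝ)/2 * 0 else 0) = 0 := by split <;> ring
  have heq1 : ψ (q 1 t₀) = φ (q 2 t₀ - q 1 t₀) := by
    have hd := peq 1 le_rfl (by omega) _ (hp1 t₀ ht₀Icc)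
    rw [hp1t₀, hif0] at hd
    linarith
  have heqN : ψ (q N t₀) = - φ (q N t₀ - q (N-1) t₀) := by
    have hd := peq N (by omega) le_rfl _ (hpN t₀ ht₀Icc)
    rw [hpNt₀, hif0] at hd
    linarith
  have heqmid : ∀ i, 2 ≤ i → i ≤ N-1 →
      ψ (q i t₀) = φ (q (i+1) t₀ - q i t₀) - φ (q i t₀ - q (i-1) t₀) := by
    intro i h2 h3
    have hd := peq i (by omega) (by omega) _ (hpi i h2 h3 t₀ ht₀Icc)
    linarith
  -- telescoping
  set Q : ℕ → ℝ := fun i => q i t₀ with hQdef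
  set D : ℕ → ℝ := fun i => if 1 ≤ i ∧ i ≤ N - 1 then φ (Q (i+1) - Q i) else 0 with hDdef
  have hD0 : D 0 = 0 := by rw [hDdef]; simp
  have hDN : D N = 0 := by rw [hDdef]; simp only; rw [if_neg (by omega)]
  have hDval : ∀ i, 1 ≤ i → i ≤ N - 1 → D i = φ (Q (i+1) - Q i) := by
    intro i h1 h2; rw [hDdef]; simp only; rw [if_pos ⟨h1, h2⟩]
  have hrel : ∀ i ∈ Finset.Icc 1 N, ψ (Q i) = D i - D (i-1) := by
    intro i hi
    rw [Finset.mem_Icc] at hi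
    rcases Nat.eq_or_lt_of_le hi.1 with h1 | h1
    · have : i = 1 := h1.symm
      subst this
      rw [hDval 1 le_rfl (by omega), hD0]
      simpa using heq1
    · rcases Nat.eq_or_lt_of_le hi.2 with h2 | h2
      · subst h2
        have hN1 : i - 1 + 1 = i := by omega
        rw [hDval (i-1) (by omega) (by omega), hN1, hDN]
        have := heqN
        linarith
      · have hmid := heqmid i (by omega) (by omega)
        have hN1 : i - 1 + 1 = i := by omega
        rw [hDval i (by omega) (by omega), hDval (i-1) (by omega) (by omega), hN1]
        linarith
  have htel := aux_tele Q D hD0 N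
  have hsum : (∑ i ∈ Finset.Icc 1 N, Q i * ψ (Q i))
      + ∑ i ∈ Finset.Icc 1 (N-1), (Q (i+1) - Q i) * D i = 0 := by
    have h1 : ∑ i ∈ Finset.Icc 1 N, Q i * ψ (Q i)
        = ∑ i ∈ Finset.Icc 1 N, Q i * (D i - D (i-1)) :=
      Finset.sum_congr rfl (fun i hi => by rw [hrel i hi])
    rw [h1, htel, hDN]
    ring
  have hmulψ : ∀ x : ℝ, x * ψ x = (k:ℝ) * b * |x| ^ k :=
    aux_mul_self k (by omega) ((k:ℝ)*b) ψ hψ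
  have hmulφ : ∀ x : ℝ, x * φ x = (k:ℝ) * a * |x| ^ k :=
    aux_mul_self k (by omega) ((k:ℝ)*a) φ hφ
  have hS1nonneg : ∀ i ∈ Finset.Icc 1 N, 0 ≤ Q i * ψ (Q i) := by
    intro i _; rw [hmulψ]; positivity
  have hS2nonneg : ∀ i ∈ Finset.Icc 1 (N-1), 0 ≤ (Q (i+1) - Q i) * D i := by
    intro i hi
    rw [Finset.mem_Icc] at hi
    rw [hDval i hi.1 hi.2, hmulφ]
    positivity
  have hQzero : ∀ i, 1 ≤ i → i ≤ N → Q i = 0 := by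
    have hS1 : ∑ i ∈ Finset.Icc 1 N, Q i * ψ (Q i) = 0 := by
      have h2 := Finset.sum_nonneg hS2nonneg
      have h1 := Finset.sum_nonneg hS1nonneg
      linarith
    intro i h1 h2
    have hterm := (Finset.sum_eq_zero_iff_of_nonneg hS1nonneg).mp hS1 i
      (Finset.mem_Icc.mpr ⟨h1, h2⟩)
    rw [hmulψ] at hterm
    have habs : |Q i| ^ k = 0 := by
      rcases mul_eq_zero.mp hterm with h | h
      · exfalso; nlinarith
      · exact h
    have := pow_eq_zero_iff (by omega : k ≠ 0) |>.mp habs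
    exact abs_eq_zero.mp this
  -- conclude: initial energy must vanish, contradiction
  have h0Icc : (0:ℝ) ∈ Set.Icc 0 τ := Set.left_mem_Icc.mpr hτ.le
  have hq0 : ∀ i, 1 ≤ i → i ≤ N → q i 0 = 0 := by
    intro i h1 h2
    rw [(main i h1 h2).2 0 h0Icc]
    exact hQzero i h1 h2
  have hterm1 : ∀ i ∈ Finset.Icc 1 N, (1/2) * (p i 0) ^ 2 + b * |q i 0| ^ k = 0 := by
    intro i hi
    rw [Finset.mem_Icc] at hi
    rw [(main i hi.1 hi.2).1 0 h0Icc, hq0 i hi.1 hi.2]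
    simp [zero_pow (by omega : k ≠ 0)]
  have hterm2 : ∀ i ∈ Finset.Icc 1 (N-1), a * |q (i+1) 0 - q i 0| ^ k = 0 := by
    intro i hi
    rw [Finset.mem_Icc] at hi
    rw [hq0 i (by omega) (by omega), hq0 (i+1) (by omega) (by omega)]
    simp [zero_pow (by omega : k ≠ 0)]
  rw [Finset.sum_eq_zero hterm1, Finset.sum_eq_zero hterm2] at hH
  norm_num at hH
end

section
/- Let N ≥ 2, k ≥ 2 even, a_k > 0, and let (r(t), p(t)) ∈ ℝ^{N-1} × ℝ^N be a C¹ solution on [0,τ] (τ > 0) of: r_i' = p_{i+1} - p_i, p_1' = k a_k |r_1|^{k-1} sign(r_1) - (1/2)𝟙_{k=2} p_1, p_N' = -k a_k |r_{N-1}|^{k-1} sign(r_{N-1}) - (1/2)𝟙_{k=2} p_N, p_i' = k a_k (|r_i|^{k-1} sign(r_i) - |r_{i-1}|^{k-1} sign(r_{i-1})) for 2 ≤ i ≤ N-1. If ∑_i (1/2)p_i(0)² + ∑_i a_k |r_i(0)|^k = 1, then ∫_0^τ (p_1(s)² + p_N(s)²) ds > 0. -/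
/-!
If `p₁` vanishes on `[0, τ]`, so does its derivative; the equation for `p₁` then forces
`φ(r₁) = 0`, hence `r₁ = 0`, and `r₁' = p₂ - p₁` gives `p₂ = 0`. Propagating along the chain,
all momenta and interdistances vanish, so the energy is `0`, not `1`. Thus `p₁` is nonzero
somewhere on `[0, τ]`, and the integral of the continuous nonnegative `p₁² + p_N²` is positive.
-/

open Set

theorem Set.EqOn.hasDerivAt_eqOn_zero {g g' : ℝ → ℝ} {a b : ℝ} (hab : a < b)
    (hg : EqOn g 0 (Icc a b)) (hd : ∀ t ∈ Icc a b, HasDerivAt g (g' t) t) :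
    EqOn g' 0 (Icc a b) := fun t ht => by
  have hu := uniqueDiffOn_Icc hab t ht
  have hzero : HasDerivWithinAt g 0 (Icc a b) t :=
    (hasDerivWithinAt_const t _ 0).congr hg (hg ht)
  rw [Pi.zero_apply, ← (hd t ht).hasDerivWithinAt.derivWithin hu, hzero.derivWithin hu]

theorem mul_abs_pow_mul_sign_eq_zero_iff {c x : ℝ} (hc : c ≠ 0) (n : ℕ) :
    c * |x| ^ n * Real.sign x = 0 ↔ x = 0 := by
  constructor
  · intro h
    by_contra hx
    exact mul_ne_zero (mul_ne_zero hc (pow_ne_zero n (abs_ne_zero.2 hx)))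
      (fun hs => hx (Real.sign_eq_zero_iff.mp hs)) h
  · rintro rfl
    simp [Real.sign_zero]

section Chain

variable {a b c : ℝ} {N : ℕ} {r p : ℕ → ℝ → ℝ} {φ : ℝ → ℝ}

theorem chain_eqOn_zero_of_left_momentum_eqOn_zero (hab : a < b) (hφ : ∀ x, φ x = 0 ↔ x = 0)
    (hr : ∀ i ∈ Finset.Icc 1 (N - 1), ∀ t ∈ Icc a b,
      HasDerivAt (r i) (p (i + 1) t - p i t) t)
    (hp1 : ∀ t ∈ Icc a b, HasDerivAt (p 1) (φ (r 1 t) - c * p 1 t) t)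
    (hpi : ∀ i, 2 ≤ i → i ≤ N - 1 → ∀ t ∈ Icc a b,
      HasDerivAt (p i) (φ (r i t) - φ (r (i - 1) t)) t)
    (h1 : EqOn (p 1) 0 (Icc a b)) :
    ∀ j ≤ N - 1, EqOn (p (j + 1)) 0 (Icc a b) ∧ (1 ≤ j → EqOn (r j) 0 (Icc a b)) := by
  intro j
  induction j with
  | zero => exact fun _ => ⟨h1, by omega⟩
  | succ j ih =>
    intro hjN
    obtain ⟨hpj, hrj⟩ := ih (by omega)
    have hrj' : EqOn (r (j + 1)) 0 (Icc a b) := by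
      intro t ht
      rcases Nat.eq_zero_or_pos j with rfl | hj
      · have hforce := (h1.hasDerivAt_eqOn_zero hab hp1) ht
        simpa [h1 ht, hφ] using hforce
      · have hforce := (hpj.hasDerivAt_eqOn_zero hab (hpi (j + 1) (by omega) hjN)) ht
        simpa [hrj hj ht, (hφ 0).2 rfl, hφ] using hforce
    refine ⟨fun t ht => ?_, fun _ => hrj'⟩
    have hvel := (hrj'.hasDerivAt_eqOn_zero hab
      (hr (j + 1) (Finset.mem_Icc.2 ⟨by omega, hjN⟩))) ht
    simpa [hpj ht, sub_eq_zero] using hvel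

end Chain

theorem stmt2_general (N k : ℕ) (hk : 2 ≤ k)
    (a τ : ℝ) (ha : 0 < a) (hτ : 0 < τ)
    (r p : ℕ → ℝ → ℝ)
    (φ : ℝ → ℝ)
    (hφ : ∀ x, φ x = k * a * |x| ^ (k - 1) * Real.sign x)
    (hr : ∀ i ∈ Finset.Icc 1 (N - 1), ∀ t ∈ Set.Icc 0 τ,
      HasDerivAt (r i) (p (i + 1) t - p i t) t)
    (hp1 : ∀ t ∈ Set.Icc 0 τ,
      HasDerivAt (p 1) (φ (r 1 t) - (if k = 2 then (1/2) * p 1 t else 0)) t)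
    (hpN : ∀ t ∈ Set.Icc 0 τ,
      HasDerivAt (p N) (-φ (r (N - 1) t) - (if k = 2 then (1/2) * p N t else 0)) t)
    (hpi : ∀ i, 2 ≤ i → i ≤ N - 1 → ∀ t ∈ Set.Icc 0 τ,
      HasDerivAt (p i) (φ (r i t) - φ (r (i - 1) t)) t)
    (hH : (∑ i ∈ Finset.Icc 1 N, (1/2) * (p i 0) ^ 2)
        + ∑ i ∈ Finset.Icc 1 (N - 1), a * |r i 0| ^ k = 1) :
    0 < ∫ s in (0:ℝ)..τ, ((p 1 s) ^ 2 + (p N s) ^ 2) := by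
  have hφ0 : ∀ x, φ x = 0 ↔ x = 0 := fun x => by
    rw [hφ]
    exact mul_abs_pow_mul_sign_eq_zero_iff (mul_ne_zero (by positivity) ha.ne') _
  have hp1' : ∀ t ∈ Icc 0 τ,
      HasDerivAt (p 1) (φ (r 1 t) - (if k = 2 then 1/2 else 0) * p 1 t) t := by
    simpa only [ite_mul, zero_mul] using hp1
  obtain ⟨t, ht, hpt⟩ : ∃ t ∈ Icc 0 τ, p 1 t ≠ 0 := by
    by_contra! h1
    have hrest := chain_eqOn_zero_of_left_momentum_eqOn_zero hτ hφ0 hr hp1' hpi h1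
    have h0 : (0 : ℝ) ∈ Icc 0 τ := ⟨le_rfl, hτ.le⟩
    rw [Finset.sum_eq_zero fun i hi => ?_, Finset.sum_eq_zero fun i hi => ?_] at hH
    · norm_num at hH
    · obtain ⟨hi1, hiN⟩ := Finset.mem_Icc.1 hi
      simp [(hrest i hiN).2 hi1 h0, show k ≠ 0 by omega]
    · obtain ⟨hi1, hiN⟩ := Finset.mem_Icc.1 hi
      obtain ⟨j, rfl⟩ : ∃ j, i = j + 1 := ⟨i - 1, by omega⟩
      simp [(hrest j (by omega)).1 h0]
  refine intervalIntegral.integral_pos hτ (fun s hs => ?_) (fun s _ => by positivity)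
    ⟨t, ht, by positivity⟩
  exact (((hp1 s hs).continuousAt.pow 2).add ((hpN s hs).continuousAt.pow 2)).continuousWithinAt

/-- non-degeneracy of the limiting deterministic unpinned chain in
interdistance coordinates: if the initial energy is 1, the boundary momenta cannot
vanish identically on `[0,τ]`. -/
theorem stmt2 (N k : ℕ) (hN : 2 ≤ N) (hk : 2 ≤ k) (hkeven : Even k)
    (a τ : ℝ) (ha : 0 < a) (hτ : 0 < τ)
    (r p : ℕ → ℝ → ℝ)
    (φ : ℝ → ℝ)
    (hφ : ∀ x, φ x = k * a * |x| ^ (k - 1) * Real.sign x)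
    (hr : ∀ i ∈ Finset.Icc 1 (N - 1), ∀ t ∈ Set.Icc 0 τ,
      HasDerivAt (r i) (p (i + 1) t - p i t) t)
    (hp1 : ∀ t ∈ Set.Icc 0 τ,
      HasDerivAt (p 1) (φ (r 1 t) - (if k = 2 then (1/2) * p 1 t else 0)) t)
    (hpN : ∀ t ∈ Set.Icc 0 τ,
      HasDerivAt (p N) (-φ (r (N - 1) t) - (if k = 2 then (1/2) * p N t else 0)) t)
    (hpi : ∀ i, 2 ≤ i → i ≤ N - 1 → ∀ t ∈ Set.Icc 0 τ,
      HasDerivAt (p i) (φ (r i t) - φ (r (i - 1) t)) t)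
    (hH : (∑ i ∈ Finset.Icc 1 N, (1/2) * (p i 0) ^ 2)
        + ∑ i ∈ Finset.Icc 1 (N - 1), a * |r i 0| ^ k = 1) :
    0 < ∫ s in (0:ℝ)..τ, ((p 1 s) ^ 2 + (p N s) ^ 2) :=
  stmt2_general N k hk a τ ha hτ r p φ hφ hr hp1 hpN hpi hH
end

section
/- Let ω > 0 with ω² ≤ 1/16, and let (r, v) : ℝ_{≥0} → ℝ² solve r' = -(ω² v + r/2), v' = r, with (r(0), v(0)) ≠ (0,0). Then liminf_{τ→∞} (∫_0^τ r(s)² ds) / (∫_0^τ v(s)² ds) > 0. -/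
open Filter Set intervalIntegral

/-!
Along a solution the energy `r² + ω² v²` decreases at rate `r²`, and `r v + v² / 4` has
derivative `r² - ω² v²`. The first identity bounds `∫₀^τ r²` and `r(τ)²`; since
`r v + v² / 4 ≥ -r²`, the second then bounds `ω² ∫₀^τ v²`. Both integrals are therefore
nondecreasing and bounded, and they are positive from time `1` on unless `r` or `v` vanishes on
`[0, 1]`, which the equations forbid for nonzero initial data. A ratio squeezed between positive
constants has positive liminf.
-/

lemma HasDerivAt.eq_zero_of_eqOn_Icc {E : Type*} [NormedAddCommGroup E] [NormedSpace ℝ E]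
    {f : ℝ → E} {f' : E} {a b : ℝ} (hf : HasDerivAt f f' a) (hab : a < b)
    (h : EqOn f 0 (Icc a b)) : f' = 0 :=
  (uniqueDiffOn_Icc hab a (left_mem_Icc.2 hab.le)).eq_deriv _ hf.hasDerivWithinAt
    ((hasDerivWithinAt_const a _ 0).congr h (h (left_mem_Icc.2 hab.le)))

lemma integral_eq_sub_of_hasDerivAt_Ici {f f' : ℝ → ℝ} {a τ : ℝ}
    (hf : ∀ t, a ≤ t → HasDerivAt f (f' t) t) (hf' : ContinuousOn f' (Ici a)) (hτ : a ≤ τ) :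
    ∫ s in a..τ, f' s = f τ - f a :=
  integral_eq_sub_of_hasDerivAt (fun t ht => hf t (uIcc_of_le hτ ▸ ht).1)
    ((hf'.mono Icc_subset_Ici_self).intervalIntegrable_of_Icc hτ)

lemma integral_sq_pos_of_ne_zero {f : ℝ → ℝ} {a b c : ℝ} (hab : a < b)
    (hf : ContinuousOn f (Icc a b)) (hc : c ∈ Icc a b) (hfc : f c ≠ 0) :
    0 < ∫ s in a..b, f s ^ 2 :=
  integral_pos hab (hf.pow 2) (fun _ _ => sq_nonneg _) ⟨c, hc, by positivity⟩

lemma integral_sq_mono_right {f : ℝ → ℝ} {a b c : ℝ} (hf : ContinuousOn f (Icc a c))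
    (hab : a ≤ b) (hbc : b ≤ c) : ∫ s in a..b, f s ^ 2 ≤ ∫ s in a..c, f s ^ 2 :=
  integral_mono_interval le_rfl hab hbc (MeasureTheory.ae_of_all _ fun _ => sq_nonneg _)
    ((hf.pow 2).intervalIntegrable_of_Icc (hab.trans hbc))

lemma liminf_div_pos_of_bounds {α : Type*} {l : Filter α} [l.NeBot] {f g : α → ℝ}
    {a A b B : ℝ} (ha : 0 < a) (hb : 0 < b) (hf : ∀ᶠ x in l, a ≤ f x ∧ f x ≤ A)
    (hg : ∀ᶠ x in l, b ≤ g x ∧ g x ≤ B) : 0 < liminf (fun x => f x / g x) l := by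
  obtain ⟨x, hbx, hxB⟩ := hg.exists
  have hlow : ∀ᶠ x in l, a / B ≤ f x / g x := (hf.and hg).mono
    fun x ⟨⟨haf, _⟩, ⟨hbg, hgB⟩⟩ => div_le_div₀ (ha.le.trans haf) haf (hb.trans_le hbg) hgB
  have hup : ∀ᶠ x in l, f x / g x ≤ A / b := (hf.and hg).mono
    fun x ⟨⟨haf, hfA⟩, ⟨hbg, _⟩⟩ => div_le_div₀ ((ha.le.trans haf).trans hfA) hfA hb hbg
  exact (div_pos ha (by linarith)).trans_le
    (le_liminf_of_le (isCoboundedUnder_ge_of_eventually_le l hup) hlow)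

section LimitingSystem

variable {ω : ℝ} {r v : ℝ → ℝ}

lemma hasDerivAt_energy {t : ℝ} (hr : HasDerivAt r (-(ω ^ 2 * v t + r t / 2)) t)
    (hv : HasDerivAt v (r t) t) :
    HasDerivAt (fun s => r s ^ 2 + ω ^ 2 * v s ^ 2) (-r t ^ 2) t :=
  ((hr.pow 2).add ((hv.pow 2).const_mul (ω ^ 2))).congr_deriv (by push_cast; ring)

lemma hasDerivAt_r_mul_v_add_v_sq_div_four {t : ℝ} (hr : HasDerivAt r (-(ω ^ 2 * v t + r t / 2)) t)
    (hv : HasDerivAt v (r t) t) :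
    HasDerivAt (fun s => r s * v s + v s ^ 2 / 4) (r t ^ 2 - ω ^ 2 * v t ^ 2) t :=
  ((hr.mul hv).add ((hv.pow 2).div_const 4)).congr_deriv (by push_cast; ring)

lemma integral_r_sq_add_energy
    (hr : ∀ t, 0 ≤ t → HasDerivAt r (-(ω ^ 2 * v t + r t / 2)) t)
    (hv : ∀ t, 0 ≤ t → HasDerivAt v (r t) t) {τ : ℝ} (hτ : 0 ≤ τ) :
    (∫ s in 0..τ, r s ^ 2) + (r τ ^ 2 + ω ^ 2 * v τ ^ 2) = r 0 ^ 2 + ω ^ 2 * v 0 ^ 2 := by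
  have hrc : ContinuousOn r (Ici 0) := HasDerivAt.continuousOn hr
  have h := integral_eq_sub_of_hasDerivAt_Ici (fun t ht => hasDerivAt_energy (hr t ht) (hv t ht))
    (hrc.pow 2).neg hτ
  rw [intervalIntegral.integral_neg] at h
  linarith

lemma integral_r_sq_sub_integral_v_sq
    (hr : ∀ t, 0 ≤ t → HasDerivAt r (-(ω ^ 2 * v t + r t / 2)) t)
    (hv : ∀ t, 0 ≤ t → HasDerivAt v (r t) t) {τ : ℝ} (hτ : 0 ≤ τ) :
    (∫ s in 0..τ, r s ^ 2) - ω ^ 2 * ∫ s in 0..τ, v s ^ 2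
      = r τ * v τ + v τ ^ 2 / 4 - (r 0 * v 0 + v 0 ^ 2 / 4) := by
  have hrc : ContinuousOn r (Ici 0) := HasDerivAt.continuousOn hr
  have hvc : ContinuousOn v (Ici 0) := HasDerivAt.continuousOn hv
  have hint {f : ℝ → ℝ} (hf : ContinuousOn f (Ici 0)) :
      IntervalIntegrable (fun s => f s ^ 2) MeasureTheory.volume 0 τ :=
    ((hf.mono Icc_subset_Ici_self).pow 2).intervalIntegrable_of_Icc hτ
  rw [← integral_eq_sub_of_hasDerivAt_Ici
    (fun t ht => hasDerivAt_r_mul_v_add_v_sq_div_four (hr t ht) (hv t ht))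
    ((hrc.pow 2).sub (continuousOn_const.mul (hvc.pow 2))) hτ,
    intervalIntegral.integral_sub (hint hrc) ((hint hvc).const_mul _), integral_const_mul]

lemma integral_r_sq_le
    (hr : ∀ t, 0 ≤ t → HasDerivAt r (-(ω ^ 2 * v t + r t / 2)) t)
    (hv : ∀ t, 0 ≤ t → HasDerivAt v (r t) t) {τ : ℝ} (hτ : 0 ≤ τ) :
    ∫ s in 0..τ, r s ^ 2 ≤ r 0 ^ 2 + ω ^ 2 * v 0 ^ 2 := by
  have := integral_r_sq_add_energy hr hv hτ
  nlinarith [sq_nonneg (r τ), sq_nonneg (ω * v τ)]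

lemma integral_v_sq_le (hω : ω ≠ 0)
    (hr : ∀ t, 0 ≤ t → HasDerivAt r (-(ω ^ 2 * v t + r t / 2)) t)
    (hv : ∀ t, 0 ≤ t → HasDerivAt v (r t) t) {τ : ℝ} (hτ : 0 ≤ τ) :
    ∫ s in 0..τ, v s ^ 2
      ≤ (2 * (r 0 ^ 2 + ω ^ 2 * v 0 ^ 2) + (r 0 * v 0 + v 0 ^ 2 / 4)) / ω ^ 2 := by
  have hF := integral_r_sq_add_energy hr hv hτ
  have hFG := integral_r_sq_sub_integral_v_sq hr hv hτ
  have hF_nonneg : 0 ≤ ∫ s in 0..τ, r s ^ 2 := integral_nonneg hτ fun _ _ => sq_nonneg _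
  rw [le_div_iff₀ (by positivity)]
  -- `r v + v² / 4 = (r + v / 2)² - r²`
  nlinarith [sq_nonneg (r τ + v τ / 2), sq_nonneg (ω * v τ)]

lemma integral_r_sq_pos (hω : ω ≠ 0)
    (hr : ∀ t, 0 ≤ t → HasDerivAt r (-(ω ^ 2 * v t + r t / 2)) t)
    (h0 : ¬(r 0 = 0 ∧ v 0 = 0)) : 0 < ∫ s in 0..1, r s ^ 2 := by
  obtain ⟨c, hc, hrc⟩ : ∃ c ∈ Icc (0 : ℝ) 1, r c ≠ 0 := by
    by_contra! h
    have hr' := (hr 0 le_rfl).eq_zero_of_eqOn_Icc one_pos h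
    have hr0 := h 0 ⟨le_rfl, zero_le_one⟩
    rw [hr0] at hr'
    exact h0 ⟨hr0, by simpa [hω] using hr'⟩
  exact integral_sq_pos_of_ne_zero one_pos
    (HasDerivAt.continuousOn fun t ht => hr t ht.1) hc hrc

lemma integral_v_sq_pos (hv : ∀ t, 0 ≤ t → HasDerivAt v (r t) t)
    (h0 : ¬(r 0 = 0 ∧ v 0 = 0)) : 0 < ∫ s in 0..1, v s ^ 2 := by
  obtain ⟨c, hc, hvc⟩ : ∃ c ∈ Icc (0 : ℝ) 1, v c ≠ 0 := by
    by_contra! h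
    exact h0 ⟨(hv 0 le_rfl).eq_zero_of_eqOn_Icc one_pos h, h 0 ⟨le_rfl, zero_le_one⟩⟩
  exact integral_sq_pos_of_ne_zero one_pos
    (HasDerivAt.continuousOn fun t ht => hv t ht.1) hc hvc

end LimitingSystem

theorem stmt3_general (ω : ℝ) (hω : 0 < ω)
    (r v : ℝ → ℝ)
    (hr : ∀ t, 0 ≤ t → HasDerivAt r (-(ω ^ 2 * v t + r t / 2)) t)
    (hv : ∀ t, 0 ≤ t → HasDerivAt v (r t) t)
    (h0 : ¬(r 0 = 0 ∧ v 0 = 0)) :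
    0 < Filter.liminf
      (fun τ : ℝ => (∫ s in (0:ℝ)..τ, (r s) ^ 2) / (∫ s in (0:ℝ)..τ, (v s) ^ 2))
      Filter.atTop := by
  have hrc : ContinuousOn r (Ici 0) := HasDerivAt.continuousOn hr
  have hvc : ContinuousOn v (Ici 0) := HasDerivAt.continuousOn hv
  have hτ : ∀ᶠ τ : ℝ in atTop, 1 ≤ τ := eventually_ge_atTop 1
  refine liminf_div_pos_of_bounds (integral_r_sq_pos hω.ne' hr h0) (integral_v_sq_pos hv h0)
    (hτ.mono fun τ hτ => ⟨?_, integral_r_sq_le hr hv (zero_le_one.trans hτ)⟩)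
    (hτ.mono fun τ hτ => ⟨?_, integral_v_sq_le hω.ne' hr hv (zero_le_one.trans hτ)⟩)
  · exact integral_sq_mono_right (hrc.mono Icc_subset_Ici_self) zero_le_one hτ
  · exact integral_sq_mono_right (hvc.mono Icc_subset_Ici_self) zero_le_one hτ

/-- Lefevere–Schenkel limiting mode, real-eigenvalue case `ω² ≤ 1/16`:
the time-averaged ratio of `r²` over `v²` has positive liminf. -/
theorem stmt3 (ω : ℝ) (hω : 0 < ω) (hω2 : ω ^ 2 ≤ 1 / 16)
    (r v : ℝ → ℝ)
    (hr : ∀ t, 0 ≤ t → HasDerivAt r (-(ω ^ 2 * v t + r t / 2)) t)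
    (hv : ∀ t, 0 ≤ t → HasDerivAt v (r t) t)
    (h0 : ¬(r 0 = 0 ∧ v 0 = 0)) :
    0 < Filter.liminf
      (fun τ : ℝ => (∫ s in (0:ℝ)..τ, (r s) ^ 2) / (∫ s in (0:ℝ)..τ, (v s) ^ 2))
      Filter.atTop :=
  stmt3_general ω hω r v hr hv h0
end

section
/- Let N ≥ 2, ω > 0, and let A be the N×N symmetric tridiagonal matrix with diagonal entries (-1+α, -2+α, ..., -2+α, -1+α) and off-diagonal entries 1 (for any α ∈ ℝ). Then the smallest linear subspace of ℝ^N containing e_1 and e_N and invariant under A is all of ℝ^N. -/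
/-! Below the diagonal, `A` has entries `1` on the subdiagonal and `0` further down, so `A eₖ` is
`eₖ₊₁` plus a combination of `e₀, …, eₖ`. An `A`-invariant subspace containing `e₀` therefore
contains `e₁, e₂, …` in turn. -/

theorem Submodule.mem_of_forall_ne_zero_single_mem {R ι : Type*} [Semiring R] [Fintype ι]
    [DecidableEq ι] {S : Submodule R (ι → R)} {x : ι → R}
    (h : ∀ i, x i ≠ 0 → Pi.single i 1 ∈ S) : x ∈ S := by
  rw [← (Pi.basisFun R ι).sum_repr x]
  refine Submodule.sum_mem S fun i _ => ?_
  by_cases hi : x i = 0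
  · simp [hi]
  · simpa using S.smul_mem (x i) (h i hi)

theorem Submodule.eq_top_of_forall_single_mem {R ι : Type*} [Semiring R] [Fintype ι]
    [DecidableEq ι] {S : Submodule R (ι → R)} (h : ∀ i, Pi.single i 1 ∈ S) : S = ⊤ :=
  eq_top_iff'.2 fun _ => mem_of_forall_ne_zero_single_mem fun i _ => h i

namespace Matrix

theorem eq_top_of_single_zero_mem_of_mulVec_mem {K : Type*} [Field K] {N : ℕ}
    {A : Matrix (Fin N) (Fin N) K} (hzero : ∀ i j : Fin N, j.1 + 1 < i.1 → A i j = 0)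
    (hsub : ∀ i j : Fin N, i.1 = j.1 + 1 → A i j ≠ 0) {S : Submodule K (Fin N → K)}
    (hinv : ∀ x ∈ S, A *ᵥ x ∈ S) (h0 : ∀ i : Fin N, i.1 = 0 → Pi.single i 1 ∈ S) :
    S = ⊤ := by
  suffices h : ∀ k, ∀ i : Fin N, i.1 ≤ k → Pi.single i 1 ∈ S from
    Submodule.eq_top_of_forall_single_mem fun i => h i.1 i le_rfl
  intro k
  induction k with
  | zero => exact fun i hi => h0 i (by omega)
  | succ k ih =>
    intro i hi
    rcases Nat.lt_or_ge i.1 (k + 1) with hik | hik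
    · exact ih i (by omega)
    set j : Fin N := ⟨k, by omega⟩
    have hij : i.1 = j.1 + 1 := by simp [j]; omega
    have hrest : A *ᵥ Pi.single j 1 - A i j • Pi.single i 1 ∈ S := by
      refine Submodule.mem_of_forall_ne_zero_single_mem fun l hl => ?_
      by_cases hli : l = i
      · simp [hli] at hl
      rcases Nat.lt_or_ge k l.1 with hlk | hlk
      · have : l.1 ≠ i.1 := fun h => hli (Fin.ext h)
        simp [hli, hzero l j (by simp [j]; omega)] at hl
      · exact ih l hlk
    have hcol : A i j • Pi.single i 1 ∈ S := by
      simpa using S.sub_mem (hinv _ (ih j le_rfl)) hrest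
    exact (S.smul_mem_iff (hsub i j hij)).1 hcol

end Matrix

/-- Kalman-type controllability step for the harmonic chain: the smallest
subspace of ℝ^N containing `e_1`, `e_N` and invariant under the tridiagonal matrix
with diagonal `(-1+α, -2+α, …, -2+α, -1+α)` and off-diagonal entries 1 is all of ℝ^N. -/
theorem stmt5 (N : ℕ) (hN : 2 ≤ N) (α : ℝ)
    (A : Matrix (Fin N) (Fin N) ℝ)
    (hA : ∀ i j : Fin N, A i j =
      if i = j then (if i.1 = 0 ∨ i.1 = N - 1 then -1 + α else -2 + α)
      else (if i.1 + 1 = j.1 ∨ j.1 + 1 = i.1 then 1 else 0))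
    (S : Submodule ℝ (Fin N → ℝ))
    (hinv : ∀ x ∈ S, A.mulVec x ∈ S)
    (h1 : Pi.single (⟨0, by omega⟩ : Fin N) (1:ℝ) ∈ S) :
    S = ⊤ := by
  refine Matrix.eq_top_of_single_zero_mem_of_mulVec_mem (A := A) (fun i j hij => ?_)
    (fun i j hij => ?_) hinv fun i hi => ?_
  · rw [hA, if_neg (Fin.ne_of_val_ne (by omega)), if_neg (by omega)]
  · rw [hA, if_neg (Fin.ne_of_val_ne (by omega)), if_pos (Or.inr hij.symm)]
    exact one_ne_zero
  · rwa [show i = ⟨0, by omega⟩ from Fin.ext hi]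
end

section
/- Fix ω > 0, D ≥ 0, T > 0 with T·D possibly zero but (T, D) ≠ (0, 0) and T > 0. Let A be the 4×4 matrix A = [[-1/2, 0, -ω², 0],[0, -1/2, 0, -ω²],[1,0,0,0],[0,1,0,0]] and B the 4×2 matrix with columns b_1 = (√T, 0, 0, -D)ᵀ and b_2 = (0, √T, D, 0)ᵀ. Then the smallest A-invariant subspace of ℝ⁴ containing the column space of B equals ℝ⁴. -/
/-!
Already the vectors `b₁, A b₁, b₂, A b₂` span `ℝ⁴`: the matrix with these rows has determinant
`-((T - ω²D²)² + (√T D / 2)²)`, a negative sum of squares that can only vanish when `T = 0`.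
-/

open Matrix

theorem Submodule.eq_top_of_rows_mem_of_isUnit {m R : Type*} [CommRing R] [Fintype m]
    [DecidableEq m] {M : Matrix m m R} (hM : IsUnit M) {S : Submodule R (m → R)}
    (hrows : ∀ i, M i ∈ S) : S = ⊤ := by
  have hspan : Submodule.span R (Set.range M.row) = ⊤ := by
    rw [← range_vecMulLinear, LinearMap.range_eq_top]
    exact vecMul_surjective_iff_isUnit.2 hM
  rw [eq_top_iff, ← hspan, Submodule.span_le]
  rintro _ ⟨i, rfl⟩
  exact hrows i

/-- The transpose of the Kalman matrix `[B | A B]` of the pair `A`, `B = [b₁ | b₂]`. -/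
def kalmanMatrix {R : Type*} [CommRing R] (A : Matrix (Fin 4) (Fin 4) R) (b₁ b₂ : Fin 4 → R) :
    Matrix (Fin 4) (Fin 4) R :=
  of ![b₁, A *ᵥ b₁, b₂, A *ᵥ b₂]

theorem kalmanMatrix_row_mem {R : Type*} [CommRing R] {A : Matrix (Fin 4) (Fin 4) R}
    {b₁ b₂ : Fin 4 → R} {S : Submodule R (Fin 4 → R)} (hinv : ∀ x ∈ S, A *ᵥ x ∈ S)
    (h₁ : b₁ ∈ S) (h₂ : b₂ ∈ S) (i : Fin 4) : kalmanMatrix A b₁ b₂ i ∈ S := by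
  fin_cases i
  exacts [h₁, hinv _ h₁, h₂, hinv _ h₂]

theorem det_kalmanMatrix_lefevereSchenkel (ω s D : ℝ) :
    (kalmanMatrix !![-1/2, 0, -ω^2, 0; 0, -1/2, 0, -ω^2; 1, 0, 0, 0; 0, 1, 0, 0]
      ![s, 0, 0, -D] ![0, s, D, 0]).det = -((s^2 - ω^2 * D^2)^2 + (s * D / 2)^2) := by
  simp [kalmanMatrix, det_succ_row_zero, Fin.sum_univ_succ, Fin.succAbove]
  ring

theorem det_kalmanMatrix_lefevereSchenkel_ne_zero (ω D : ℝ) {s : ℝ} (hs : s ≠ 0) :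
    (kalmanMatrix !![-1/2, 0, -ω^2, 0; 0, -1/2, 0, -ω^2; 1, 0, 0, 0; 0, 1, 0, 0]
      ![s, 0, 0, -D] ![0, s, D, 0]).det ≠ 0 := by
  rw [det_kalmanMatrix_lefevereSchenkel, neg_ne_zero]
  rcases eq_or_ne D 0 with rfl | hD
  · simp [hs]
  · have hsD : 0 < (s * D / 2) ^ 2 := by positivity
    exact (add_pos_of_nonneg_of_pos (sq_nonneg _) hsD).ne'

theorem stmt6_general (ω T D : ℝ) (hT : 0 < T)
    (A : Matrix (Fin 4) (Fin 4) ℝ)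
    (hA : A = !![-1/2, 0, -ω^2, 0; 0, -1/2, 0, -ω^2; 1, 0, 0, 0; 0, 1, 0, 0])
    (b₁ b₂ : Fin 4 → ℝ)
    (hb₁ : b₁ = ![Real.sqrt T, 0, 0, -D])
    (hb₂ : b₂ = ![0, Real.sqrt T, D, 0])
    (S : Submodule ℝ (Fin 4 → ℝ))
    (hinv : ∀ x ∈ S, A.mulVec x ∈ S)
    (h1 : b₁ ∈ S) (h2 : b₂ ∈ S) :
    S = ⊤ := by
  subst hA hb₁ hb₂
  have hdet := det_kalmanMatrix_lefevereSchenkel_ne_zero ω D (Real.sqrt_pos.2 hT).ne'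
  exact S.eq_top_of_rows_mem_of_isUnit ((isUnit_iff_isUnit_det _).2 hdet.isUnit)
    (kalmanMatrix_row_mem hinv h1 h2)

/-- Kalman controllability for one Fourier mode of the Lefevere–Schenkel
chain: the smallest A-invariant subspace of ℝ⁴ containing the two columns of B is ℝ⁴. -/
theorem stmt6 (ω T D : ℝ) (hω : 0 < ω) (hT : 0 < T) (hD : 0 ≤ D)
    (A : Matrix (Fin 4) (Fin 4) ℝ)
    (hA : A = !![-1/2, 0, -ω^2, 0; 0, -1/2, 0, -ω^2; 1, 0, 0, 0; 0, 1, 0, 0])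
    (b₁ b₂ : Fin 4 → ℝ)
    (hb₁ : b₁ = ![Real.sqrt T, 0, 0, -D])
    (hb₂ : b₂ = ![0, Real.sqrt T, D, 0])
    (S : Submodule ℝ (Fin 4 → ℝ))
    (hinv : ∀ x ∈ S, A.mulVec x ∈ S)
    (h1 : b₁ ∈ S) (h2 : b₂ ∈ S) :
    S = ⊤ :=
  stmt6_general ω T D hT A hA b₁ b₂ hb₁ hb₂ S hinv h1 h2
end
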